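/- arXiv:1507.04230 — 2 statements merged into one kernel-verified Lean document; each statement's English description precedes it below -/
import Mathlib

section
/- Let U₁, U₂ ∈ ℝ^{n×d} be semi-orthogonal, let Λⱼ = diag(λ_{j,1},…,λ_{j,d}) (j = 1,2) have nonnegative entries with λ_{j,1} the largest and λ_{j,d} the smallest, let σ² > 0, set Σⱼ = UⱼΛⱼUⱼᵀ + σ²·Iₙ, and define the Bhattacharyya exponent K = (1/2)·log det((Σ₁+Σ₂)/2) − (1/4)·(log det Σ₁ + log det Σ₂). Let D = (U₁Λ₁U₁ᵀ + U₂Λ₂U₂ᵀ)/(2σ²) and assume every eigenvalue of D is at most 1. Then K ≤ (1/σ⁴)·(c₂ − (1/16)·λ_{1,d}·λ_{2,d}·trace(U₁ᵀU₂U₂ᵀU₁)), where c₂ = (σ⁴/4)·[ Σᵢ λ_{1,i}/σ² − (1/2)·Σᵢ (λ_{1,i}/(2σ²))² − Σᵢ log(1 + λ_{1,i}/σ²) ] + (σ⁴/4)·[ Σᵢ λ_{2,i}/σ² − (1/2)·Σᵢ (λ_{2,i}/(2σ²))² − Σᵢ log(1 + λ_{2,i}/σ²) ]. -/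
open Matrix

/-!
Write `A = U₁Λ₁U₁ᵀ`, `B = U₂Λ₂U₂ᵀ`. Since `UⱼᵀUⱼ = I`, Sylvester's identity gives
`det Σⱼ = σ²ⁿ ∏ᵢ (1 + λⱼᵢ/σ²)`, and `(Σ₁ + Σ₂)/2 = σ²(I + D)`, so
`K = ½ log det (I + D) - ¼ ∑ⱼ ∑ᵢ log (1 + λⱼᵢ/σ²)`. The eigenvalues of `D` lie in `[0, 1]`,
where `log (1 + μ) ≤ μ - μ²/4`; hence `log det (I + D) ≤ tr D - tr (D²)/4`. Both traces are
explicit in the `λⱼᵢ` except for the cross term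
`tr (AB) = ∑ᵢⱼ λ₁ᵢ λ₂ⱼ ((U₁ᵀU₂)ᵢⱼ)² ≥ λ₁_d λ₂_d ‖U₁ᵀU₂‖²_F`, and `‖U₁ᵀU₂‖²_F = tr (U₁ᵀU₂U₂ᵀU₁)`.
-/

theorem Real.log_one_add_le_sub_sq_div_four {x : ℝ} (h0 : 0 ≤ x) (h1 : x ≤ 1) :
    Real.log (1 + x) ≤ x - x ^ 2 / 4 := by
  rw [Real.log_le_iff_le_exp (by linarith)]
  have hy : 0 ≤ x - x ^ 2 / 4 := by nlinarith
  calc 1 + x ≤ 1 + (x - x ^ 2 / 4) + (x - x ^ 2 / 4) ^ 2 / 2 := by nlinarith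
    _ ≤ Real.exp (x - x ^ 2 / 4) := Real.quadratic_le_exp_of_nonneg hy

namespace Matrix

variable {n m m₁ m₂ R : Type*} [Fintype n] [Fintype m] [Fintype m₁] [Fintype m₂]

section CommSemiring

variable [CommSemiring R]

theorem trace_mul_transpose (X M : Matrix m n R) :
    (X * Mᵀ).trace = ∑ i, ∑ j, X i j * M i j := by
  simp [trace, mul_apply]

theorem trace_mul_transpose_self (M : Matrix m n R) :
    (M * Mᵀ).trace = ∑ i, ∑ j, M i j ^ 2 := by
  simp [trace_mul_transpose, sq]

theorem trace_mul_diagonal_mul_transpose [DecidableEq m] {U : Matrix n m R} (hU : Uᵀ * U = 1)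
    (l : m → R) : (U * diagonal l * Uᵀ).trace = ∑ i, l i := by
  rw [trace_mul_cycle, hU, Matrix.one_mul, trace_diagonal]

theorem trace_mul_diagonal_mul_transpose_mul [DecidableEq m₁] [DecidableEq m₂]
    (U₁ : Matrix n m₁ R) (U₂ : Matrix n m₂ R) (l₁ : m₁ → R) (l₂ : m₂ → R) :
    (U₁ * diagonal l₁ * U₁ᵀ * (U₂ * diagonal l₂ * U₂ᵀ)).trace =
      ∑ i, ∑ j, l₁ i * l₂ j * (U₁ᵀ * U₂) i j ^ 2 := by
  have hcycle : U₁ * diagonal l₁ * U₁ᵀ * (U₂ * diagonal l₂ * U₂ᵀ) =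
      U₁ * (diagonal l₁ * (U₁ᵀ * U₂) * diagonal l₂ * U₂ᵀ) := by
    simp only [Matrix.mul_assoc]
  have hM : U₂ᵀ * U₁ = (U₁ᵀ * U₂)ᵀ := by simp
  rw [hcycle, trace_mul_comm, Matrix.mul_assoc _ U₂ᵀ, hM, trace_mul_transpose]
  simp only [mul_diagonal, diagonal_mul]
  congr! 2 with i _ j _
  ring

theorem trace_mul_diagonal_mul_transpose_sq [DecidableEq m] {U : Matrix n m R}
    (hU : Uᵀ * U = 1) (l : m → R) :
    (U * diagonal l * Uᵀ * (U * diagonal l * Uᵀ)).trace = ∑ i, l i ^ 2 := by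
  simp [trace_mul_diagonal_mul_transpose_mul, hU, one_apply, sq]

theorem trace_add_mul_self_mul_diagonal_mul_transpose [DecidableEq m₁] [DecidableEq m₂]
    {U₁ : Matrix n m₁ R} {U₂ : Matrix n m₂ R} (hU₁ : U₁ᵀ * U₁ = 1) (hU₂ : U₂ᵀ * U₂ = 1)
    (l₁ : m₁ → R) (l₂ : m₂ → R) :
    ((U₁ * diagonal l₁ * U₁ᵀ + U₂ * diagonal l₂ * U₂ᵀ) *
        (U₁ * diagonal l₁ * U₁ᵀ + U₂ * diagonal l₂ * U₂ᵀ)).trace =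
      ∑ i, l₁ i ^ 2 + ∑ i, l₂ i ^ 2 +
        2 * (U₁ * diagonal l₁ * U₁ᵀ * (U₂ * diagonal l₂ * U₂ᵀ)).trace := by
  rw [Matrix.add_mul, Matrix.mul_add, Matrix.mul_add, trace_add, trace_add, trace_add,
    trace_mul_comm (U₂ * _ * _), trace_mul_diagonal_mul_transpose_sq hU₁,
    trace_mul_diagonal_mul_transpose_sq hU₂]
  ring

end CommSemiring

theorem det_mul_diagonal_mul_transpose_add_smul_one {K : Type*} [Field K] [DecidableEq n]
    [DecidableEq m] {U : Matrix n m K} (hU : Uᵀ * U = 1) (l : m → K) {s : K} (hs : s ≠ 0) :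
    (U * diagonal l * Uᵀ + s • 1).det = s ^ Fintype.card n * ∏ i, (1 + l i / s) := by
  have hfactor : U * diagonal l * Uᵀ + s • 1 = s • (1 + U * (s⁻¹ • (diagonal l * Uᵀ))) := by
    rw [smul_add, Matrix.mul_smul, smul_smul, mul_inv_cancel₀ hs, one_smul, Matrix.mul_assoc,
      add_comm]
  have hswap : 1 + s⁻¹ • (diagonal l * Uᵀ) * U = diagonal fun i ↦ 1 + l i / s := by
    rw [Matrix.smul_mul, Matrix.mul_assoc, hU, Matrix.mul_one, ← diagonal_smul, ← diagonal_one,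
      diagonal_add]
    simp [div_eq_inv_mul]
  rw [hfactor, det_smul, det_one_add_mul_comm, hswap, det_diagonal]

theorem log_det_mul_diagonal_mul_transpose_add_smul_one [DecidableEq n] [DecidableEq m]
    {U : Matrix n m ℝ} (hU : Uᵀ * U = 1) {l : m → ℝ} (hl : ∀ i, 0 ≤ l i) {s : ℝ} (hs : 0 < s) :
    Real.log (U * diagonal l * Uᵀ + s • 1).det =
      Fintype.card n * Real.log s + ∑ i, Real.log (1 + l i / s) := by
  have hpos : ∀ i, 1 + l i / s ≠ 0 := fun i ↦ by positivity [hl i]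
  rw [det_mul_diagonal_mul_transpose_add_smul_one hU l hs.ne', Real.log_mul (by positivity)
    (Finset.prod_ne_zero_iff.mpr fun i _ ↦ hpos i), Real.log_pow, Real.log_prod fun i _ ↦ hpos i]

theorem posSemidef_mul_diagonal_mul_transpose [DecidableEq m] (U : Matrix n m ℝ) {l : m → ℝ}
    (hl : ∀ i, 0 ≤ l i) : (U * diagonal l * Uᵀ).PosSemidef := by
  simpa using (posSemidef_diagonal_iff.mpr hl).mul_mul_conjTranspose_same U

theorem mul_mul_trace_le_trace_mul_of_le [DecidableEq m₁] [DecidableEq m₂]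
    (U₁ : Matrix n m₁ ℝ) (U₂ : Matrix n m₂ ℝ) {l₁ : m₁ → ℝ} {l₂ : m₂ → ℝ} {a b : ℝ}
    (ha : 0 ≤ a) (hb : 0 ≤ b) (hal : ∀ i, a ≤ l₁ i) (hbl : ∀ j, b ≤ l₂ j) :
    a * b * (U₁ᵀ * U₂ * U₂ᵀ * U₁).trace ≤
      (U₁ * diagonal l₁ * U₁ᵀ * (U₂ * diagonal l₂ * U₂ᵀ)).trace := by
  have hT : U₁ᵀ * U₂ * U₂ᵀ * U₁ = U₁ᵀ * U₂ * (U₁ᵀ * U₂)ᵀ := by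
    simp [Matrix.mul_assoc]
  rw [hT, trace_mul_transpose_self, trace_mul_diagonal_mul_transpose_mul]
  simp only [Finset.mul_sum]
  refine Finset.sum_le_sum fun i _ ↦ Finset.sum_le_sum fun j _ ↦ ?_
  exact mul_le_mul_of_nonneg_right (mul_le_mul (hal i) (hbl j) hb (ha.trans (hal i)))
    (sq_nonneg _)

section Spectral

variable [DecidableEq n]

open Unitary

theorem det_conjStarAlgAut [CommRing R] [StarRing R] (u : unitary (Matrix n n R))
    (X : Matrix n n R) : (conjStarAlgAut R _ u X).det = X.det := by
  rw [conjStarAlgAut_apply, det_conj_of_mul_eq_one (mul_star_self_of_mem u.2)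
    (star_mul_self_of_mem u.2)]

theorem trace_conjStarAlgAut [CommRing R] [StarRing R] (u : unitary (Matrix n n R))
    (X : Matrix n n R) : (conjStarAlgAut R _ u X).trace = X.trace := by
  rw [conjStarAlgAut_apply, trace_mul_cycle, star_mul_self_of_mem u.2, Matrix.one_mul]

namespace IsHermitian

variable {D : Matrix n n ℝ}

theorem det_one_add (hD : D.IsHermitian) : (1 + D).det = ∏ i, (1 + hD.eigenvalues i) := by
  conv_lhs => rw [hD.spectral_theorem, ← map_one (conjStarAlgAut ℝ _ hD.eigenvectorUnitary),
    ← map_add, det_conjStarAlgAut, ← diagonal_one, diagonal_add, det_diagonal]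
  rfl

theorem trace_mul_self (hD : D.IsHermitian) : (D * D).trace = ∑ i, hD.eigenvalues i ^ 2 := by
  conv_lhs => rw [hD.spectral_theorem, ← map_mul, trace_conjStarAlgAut, diagonal_mul_diagonal,
    trace_diagonal]
  simp [sq]

theorem log_det_one_add_le (hD : D.IsHermitian) (h0 : ∀ i, 0 ≤ hD.eigenvalues i)
    (h1 : ∀ i, hD.eigenvalues i ≤ 1) :
    Real.log (1 + D).det ≤ D.trace - (D * D).trace / 4 := by
  have hpos : ∀ i, 1 + hD.eigenvalues i ≠ 0 := fun i ↦ by linarith [h0 i]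
  rw [hD.det_one_add, Real.log_prod fun i _ ↦ hpos i, hD.trace_eq_sum_eigenvalues,
    hD.trace_mul_self, Finset.sum_div, ← Finset.sum_sub_distrib]
  exact Finset.sum_le_sum fun i _ ↦ Real.log_one_add_le_sub_sq_div_four (h0 i) (h1 i)

end IsHermitian

end Spectral

end Matrix

/-- `s` is the noise variance `σ²`. -/
theorem stmt_9_general {n d : ℕ} (U₁ U₂ : Matrix (Fin n) (Fin (d + 1)) ℝ)
    (hU₁ : U₁ᵀ * U₁ = 1) (hU₂ : U₂ᵀ * U₂ = 1)
    (l₁ l₂ : Fin (d + 1) → ℝ)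
    (hl₁0 : ∀ i, 0 ≤ l₁ i) (hl₂0 : ∀ i, 0 ≤ l₂ i)
    (hl₁min : ∀ i, l₁ (Fin.last d) ≤ l₁ i) (hl₂min : ∀ i, l₂ (Fin.last d) ≤ l₂ i)
    (s : ℝ) (hs : 0 < s)
    (S₁ S₂ D : Matrix (Fin n) (Fin n) ℝ)
    (hS₁ : S₁ = U₁ * Matrix.diagonal l₁ * U₁ᵀ + s • 1)
    (hS₂ : S₂ = U₂ * Matrix.diagonal l₂ * U₂ᵀ + s • 1)
    (hD : D = (2 * s)⁻¹ • (U₁ * Matrix.diagonal l₁ * U₁ᵀ + U₂ * Matrix.diagonal l₂ * U₂ᵀ))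
    (hDh : D.IsHermitian) (hDeig : ∀ i, hDh.eigenvalues i ≤ 1)
    (K c₂ : ℝ)
    (hK : K = (1 / 2) * Real.log ((((2:ℝ)⁻¹) • (S₁ + S₂)).det) -
        (1 / 4) * (Real.log S₁.det + Real.log S₂.det))
    (hc₂ : c₂ =
        (s ^ 2 / 4) * ((∑ i, l₁ i / s) - (1 / 2) * ∑ i, (l₁ i / (2 * s)) ^ 2 -
            ∑ i, Real.log (1 + l₁ i / s)) +
        (s ^ 2 / 4) * ((∑ i, l₂ i / s) - (1 / 2) * ∑ i, (l₂ i / (2 * s)) ^ 2 -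
            ∑ i, Real.log (1 + l₂ i / s))) :
    K ≤ (1 / s ^ 2) *
        (c₂ - (1 / 16) * l₁ (Fin.last d) * l₂ (Fin.last d) *
          (U₁ᵀ * U₂ * U₂ᵀ * U₁).trace) := by
  set A := U₁ * diagonal l₁ * U₁ᵀ
  set B := U₂ * diagonal l₂ * U₂ᵀ
  have hDpsd : D.PosSemidef := hD ▸ ((posSemidef_mul_diagonal_mul_transpose U₁ hl₁0).add
    (posSemidef_mul_diagonal_mul_transpose U₂ hl₂0)).smul (by positivity)
  have hlogS₁ : Real.log S₁.det = n * Real.log s + ∑ i, Real.log (1 + l₁ i / s) := by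
    rw [hS₁, log_det_mul_diagonal_mul_transpose_add_smul_one hU₁ hl₁0 hs, Fintype.card_fin]
  have hlogS₂ : Real.log S₂.det = n * Real.log s + ∑ i, Real.log (1 + l₂ i / s) := by
    rw [hS₂, log_det_mul_diagonal_mul_transpose_add_smul_one hU₂ hl₂0 hs, Fintype.card_fin]
  have hlogS : Real.log ((2:ℝ)⁻¹ • (S₁ + S₂)).det = n * Real.log s + Real.log (1 + D).det := by
    have hmid : (2:ℝ)⁻¹ • (S₁ + S₂) = s • (1 + D) := by
      rw [hS₁, hS₂, hD, smul_add s, smul_smul, show s * (2 * s)⁻¹ = 2⁻¹ by field_simp]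
      module
    rw [hmid, det_smul, Fintype.card_fin, Real.log_mul (by positivity)
      (PosDef.one.add_posSemidef hDpsd).det_pos.ne', Real.log_pow]
  have htr : D.trace = (2 * s)⁻¹ * (∑ i, l₁ i + ∑ i, l₂ i) := by
    rw [hD, trace_smul, trace_add, trace_mul_diagonal_mul_transpose hU₁,
      trace_mul_diagonal_mul_transpose hU₂, smul_eq_mul]
  have htr_sq : (D * D).trace =
      (2 * s)⁻¹ ^ 2 * (∑ i, l₁ i ^ 2 + ∑ i, l₂ i ^ 2 + 2 * (A * B).trace) := by
    rw [hD, smul_mul_smul_comm, trace_smul,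
      trace_add_mul_self_mul_diagonal_mul_transpose hU₁ hU₂, smul_eq_mul]
    ring
  have hcross : l₁ (Fin.last d) * l₂ (Fin.last d) * (U₁ᵀ * U₂ * U₂ᵀ * U₁).trace ≤ (A * B).trace :=
    mul_mul_trace_le_trace_mul_of_le U₁ U₂ (hl₁0 _) (hl₂0 _) hl₁min hl₂min
  have hlogD := hDh.log_det_one_add_le hDpsd.eigenvalues_nonneg hDeig
  rw [htr, htr_sq] at hlogD
  have hc₂' : 1 / s ^ 2 * c₂ = (∑ i, l₁ i + ∑ i, l₂ i) / (4 * s) -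
      (∑ i, l₁ i ^ 2 + ∑ i, l₂ i ^ 2) / (32 * s ^ 2) -
      (∑ i, Real.log (1 + l₁ i / s) + ∑ i, Real.log (1 + l₂ i / s)) / 4 := by
    simp only [hc₂, div_pow, ← Finset.sum_div]
    field_simp
    ring
  rw [hK, hlogS, hlogS₁, hlogS₂, mul_sub, hc₂']
  linear_combination (1 / 2) * hlogD + (1 / (16 * s ^ 2)) * hcross

/-- Low-SNR upper bound on the Bhattacharyya exponent `K`.  Here `s` plays the
role of the noise variance `σ²`, `l₁ 0` (resp. `l₂ 0`) is the largest eigenvalue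
and `l₁ (Fin.last d)` (resp. `l₂ (Fin.last d)`) the smallest. -/
theorem stmt_9 {n d : ℕ} (U₁ U₂ : Matrix (Fin n) (Fin (d + 1)) ℝ)
    (hU₁ : U₁ᵀ * U₁ = 1) (hU₂ : U₂ᵀ * U₂ = 1)
    (l₁ l₂ : Fin (d + 1) → ℝ)
    (hl₁0 : ∀ i, 0 ≤ l₁ i) (hl₂0 : ∀ i, 0 ≤ l₂ i)
    (hl₁max : ∀ i, l₁ i ≤ l₁ 0) (hl₂max : ∀ i, l₂ i ≤ l₂ 0)
    (hl₁min : ∀ i, l₁ (Fin.last d) ≤ l₁ i) (hl₂min : ∀ i, l₂ (Fin.last d) ≤ l₂ i)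
    (s : ℝ) (hs : 0 < s)
    (S₁ S₂ D : Matrix (Fin n) (Fin n) ℝ)
    (hS₁ : S₁ = U₁ * Matrix.diagonal l₁ * U₁ᵀ + s • 1)
    (hS₂ : S₂ = U₂ * Matrix.diagonal l₂ * U₂ᵀ + s • 1)
    (hD : D = (2 * s)⁻¹ • (U₁ * Matrix.diagonal l₁ * U₁ᵀ + U₂ * Matrix.diagonal l₂ * U₂ᵀ))
    (hDh : D.IsHermitian) (hDeig : ∀ i, hDh.eigenvalues i ≤ 1)
    (K c₂ : ℝ)
    (hK : K = (1 / 2) * Real.log ((((2:ℝ)⁻¹) • (S₁ + S₂)).det) -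
        (1 / 4) * (Real.log S₁.det + Real.log S₂.det))
    (hc₂ : c₂ =
        (s ^ 2 / 4) * ((∑ i, l₁ i / s) - (1 / 2) * ∑ i, (l₁ i / (2 * s)) ^ 2 -
            ∑ i, Real.log (1 + l₁ i / s)) +
        (s ^ 2 / 4) * ((∑ i, l₂ i / s) - (1 / 2) * ∑ i, (l₂ i / (2 * s)) ^ 2 -
            ∑ i, Real.log (1 + l₂ i / s))) :
    K ≤ (1 / s ^ 2) *
        (c₂ - (1 / 16) * l₁ (Fin.last d) * l₂ (Fin.last d) *
          (U₁ᵀ * U₂ * U₂ᵀ * U₁).trace) :=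
  stmt_9_general U₁ U₂ hU₁ hU₂ l₁ l₂ hl₁0 hl₂0 hl₁min hl₂min s hs S₁ S₂ D hS₁ hS₂ hD hDh hDeig K c₂
    hK hc₂
end

section
/- Let X ∈ ℝ^{n×N} be such that XXᵀ is invertible, let T ∈ ℝ^{N×N} be symmetric positive semidefinite, and set P⋆ = (XXᵀ)⁻¹ X T Xᵀ (XXᵀ)⁻¹. Then P⋆ is symmetric positive semidefinite and for every matrix P ∈ ℝ^{n×n} one has ‖Xᵀ P⋆ X − T‖_F ≤ ‖Xᵀ P X − T‖_F; in particular P⋆ minimizes ‖Xᵀ P X − T‖_F² over all positive semidefinite P. -/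
open Matrix

/-- The Frobenius norm of a real matrix. -/
noncomputable def frobNorm {m k : ℕ} (M : Matrix (Fin m) (Fin k) ℝ) : ℝ :=
  Real.sqrt (∑ i, ∑ j, (M i j) ^ 2)

/-!
Put `Π = Xᵀ (X Xᵀ)⁻¹ X`, the orthogonal projection onto the row space of `X`. Then
`Xᵀ P⋆ X = Π T Π`, while every `Xᵀ P X` is fixed by the compression `M ↦ Π M Π`. This compression
is self-adjoint and idempotent for the trace form `⟪A, B⟫ = tr (Aᵀ B)`, so `Π T Π - T` is orthogonal
to `Xᵀ P X - Π T Π`, and Pythagoras gives `‖Xᵀ P X - T‖² = ‖Xᵀ P X - Π T Π‖² + ‖Π T Π - T‖²`.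
Positive semidefiniteness of `P⋆` is that of the congruence `B T Bᵀ` with `B = (X Xᵀ)⁻¹ X`.
-/

namespace Matrix

section Compression

variable {ι R : Type*} [Fintype ι] [CommRing R] {Q : Matrix ι ι R}

lemma trace_transpose_mul_eq_zero_of_compress (hQ : Qᵀ = Q) {E D : Matrix ι ι R}
    (hE : Q * E * Q = E) (hD : Q * D * Q = 0) : (Eᵀ * D).trace = 0 := by
  have hEt : Eᵀ = Q * Eᵀ * Q := by
    conv_lhs => rw [← hE]
    rw [transpose_mul, transpose_mul, hQ, Matrix.mul_assoc]
  calc (Eᵀ * D).trace = (Q * Eᵀ * Q * D).trace := by rw [← hEt]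
    _ = (Q * (Eᵀ * Q * D)).trace := by simp only [Matrix.mul_assoc]
    _ = (Eᵀ * Q * D * Q).trace := trace_mul_comm _ _
    _ = (Eᵀ * (Q * D * Q)).trace := by simp only [Matrix.mul_assoc]
    _ = 0 := by rw [hD, Matrix.mul_zero, trace_zero]

lemma trace_transpose_mul_self_sub_eq_add (hQ : Qᵀ = Q) (hQQ : Q * Q = Q)
    {A : Matrix ι ι R} (hA : Q * A * Q = A) (T : Matrix ι ι R) :
    ((A - T)ᵀ * (A - T)).trace =
      ((A - Q * T * Q)ᵀ * (A - Q * T * Q)).trace +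
        ((Q * T * Q - T)ᵀ * (Q * T * Q - T)).trace := by
  set B := Q * T * Q
  have hAB : Q * (A - B) * Q = A - B := by
    rw [Matrix.mul_sub, Matrix.sub_mul, hA]
    simp only [B, ← Matrix.mul_assoc, hQQ]
    simp only [Matrix.mul_assoc, hQQ]
  have hBT : Q * (B - T) * Q = 0 := by
    rw [Matrix.mul_sub, Matrix.sub_mul, sub_eq_zero]
    simp only [B, ← Matrix.mul_assoc, hQQ]
    simp only [Matrix.mul_assoc, hQQ]
  have hcross : ((A - B)ᵀ * (B - T)).trace = 0 :=
    trace_transpose_mul_eq_zero_of_compress hQ hAB hBT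
  have hcross' : ((B - T)ᵀ * (A - B)).trace = 0 := by
    rw [← trace_transpose, transpose_mul, transpose_transpose, hcross]
  rw [show A - T = (A - B) + (B - T) by abel, transpose_add, Matrix.add_mul, Matrix.mul_add,
    Matrix.mul_add, trace_add, trace_add, trace_add, hcross, hcross', add_zero, zero_add]

end Compression

section RowSpaceProjection

variable {m n R : Type*} [Fintype m] [Fintype n] [DecidableEq m] [CommRing R]

noncomputable def rowSpaceProjection (X : Matrix m n R) : Matrix n n R :=
  Xᵀ * (X * Xᵀ)⁻¹ * X

lemma transpose_rowSpaceProjection (X : Matrix m n R) :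
    (rowSpaceProjection X)ᵀ = rowSpaceProjection X := by
  rw [rowSpaceProjection, transpose_mul, transpose_mul, transpose_transpose, transpose_nonsing_inv,
    transpose_mul, transpose_transpose, Matrix.mul_assoc]

variable {X : Matrix m n R}

lemma mul_rowSpaceProjection (hX : IsUnit (X * Xᵀ).det) : X * rowSpaceProjection X = X := by
  rw [rowSpaceProjection, ← Matrix.mul_assoc, ← Matrix.mul_assoc, mul_nonsing_inv _ hX,
    Matrix.one_mul]

lemma rowSpaceProjection_mul_transpose (hX : IsUnit (X * Xᵀ).det) :
    rowSpaceProjection X * Xᵀ = Xᵀ := by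
  rw [rowSpaceProjection, Matrix.mul_assoc, Matrix.mul_assoc, nonsing_inv_mul _ hX,
    Matrix.mul_one]

lemma rowSpaceProjection_mul_self (hX : IsUnit (X * Xᵀ).det) :
    rowSpaceProjection X * rowSpaceProjection X = rowSpaceProjection X := by
  nth_rw 1 [rowSpaceProjection]
  rw [Matrix.mul_assoc, mul_rowSpaceProjection hX]
  rfl

lemma rowSpaceProjection_mul_mul_rowSpaceProjection (hX : IsUnit (X * Xᵀ).det)
    (P : Matrix m m R) :
    rowSpaceProjection X * (Xᵀ * P * X) * rowSpaceProjection X = Xᵀ * P * X := by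
  rw [← Matrix.mul_assoc, ← Matrix.mul_assoc, rowSpaceProjection_mul_transpose hX,
    Matrix.mul_assoc, mul_rowSpaceProjection hX]

end RowSpaceProjection

end Matrix

lemma frobNorm_eq_sqrt_trace {m k : ℕ} (M : Matrix (Fin m) (Fin k) ℝ) :
    frobNorm M = √(Mᵀ * M).trace := by
  rw [frobNorm, trace, Finset.sum_comm]
  simp only [diag, mul_apply, transpose_apply, sq]

lemma frobNorm_compress_sub_le {N : ℕ} {Q : Matrix (Fin N) (Fin N) ℝ} (hQ : Qᵀ = Q)
    (hQQ : Q * Q = Q) {A : Matrix (Fin N) (Fin N) ℝ} (hA : Q * A * Q = A)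
    (T : Matrix (Fin N) (Fin N) ℝ) : frobNorm (Q * T * Q - T) ≤ frobNorm (A - T) := by
  rw [frobNorm_eq_sqrt_trace, frobNorm_eq_sqrt_trace,
    trace_transpose_mul_self_sub_eq_add hQ hQQ hA T]
  have hnonneg : 0 ≤ ((A - Q * T * Q)ᵀ * (A - Q * T * Q)).trace := by
    simpa only [conjTranspose_eq_transpose_of_trivial]
      using (posSemidef_conjTranspose_mul_self (A - Q * T * Q)).trace_nonneg
  exact Real.sqrt_le_sqrt (by linarith)

theorem stmt_15 {n N : ℕ} (X : Matrix (Fin n) (Fin N) ℝ)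
    (hX : IsUnit (X * Xᵀ).det)
    (T : Matrix (Fin N) (Fin N) ℝ) (hT : T.PosSemidef)
    (Pstar : Matrix (Fin n) (Fin n) ℝ)
    (hPstar : Pstar = (X * Xᵀ)⁻¹ * X * T * Xᵀ * (X * Xᵀ)⁻¹) :
    Pstar.PosSemidef ∧
      ∀ P : Matrix (Fin n) (Fin n) ℝ,
        frobNorm (Xᵀ * Pstar * X - T) ≤ frobNorm (Xᵀ * P * X - T) := by
  have hGram : ((X * Xᵀ)⁻¹)ᵀ = (X * Xᵀ)⁻¹ := by
    rw [transpose_nonsing_inv, transpose_mul, transpose_transpose]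
  constructor
  · simpa [hPstar, conjTranspose_eq_transpose_of_trivial, transpose_mul, hGram, Matrix.mul_assoc]
      using hT.mul_mul_conjTranspose_same ((X * Xᵀ)⁻¹ * X)
  · intro P
    have hfit : Xᵀ * Pstar * X = rowSpaceProjection X * T * rowSpaceProjection X := by
      simp only [hPstar, rowSpaceProjection, Matrix.mul_assoc]
    rw [hfit]
    exact frobNorm_compress_sub_le (transpose_rowSpaceProjection X)
      (rowSpaceProjection_mul_self hX) (rowSpaceProjection_mul_mul_rowSpaceProjection hX P) T
end
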